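/- arXiv:0802.2120 — 2 statements merged into one kernel-verified Lean document; each statement's English description precedes it below -/
import Mathlib

section
/- For five pairwise distinct complex numbers wi, wj, wk, wl, wm, the recursion ρ(wj,wk,wl,wm) = (ρ(wi,wj,wk,wm) − 1)/(ρ(wi,wj,wk,wm) − ρ(wi,wj,wk,wl)) holds, provided the denominator ρ(wi,wj,wk,wm) − ρ(wi,wj,wk,wl) is nonzero. -/
/-! Both `ρ(i,j,k,m) - 1` and `ρ(i,j,k,m) - ρ(i,j,k,l)` factor into differences of the points,
with the common factor `(k - i) / ((i - j) (k - m))`; their quotient is `ρ(j,k,l,m)`. -/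

/-- The cross-ratio of four complex numbers. -/
noncomputable def crossRatio (w1 w2 w3 w4 : ℂ) : ℂ :=
  ((w2 - w3) * (w4 - w1)) / ((w1 - w2) * (w3 - w4))

theorem crossRatio_sub_one {a b c d : ℂ} (hab : a ≠ b) (hcd : c ≠ d) :
    crossRatio a b c d - 1 = (b - d) * (c - a) / ((a - b) * (c - d)) := by
  rw [crossRatio, div_sub_one (mul_ne_zero (sub_ne_zero.2 hab) (sub_ne_zero.2 hcd))]
  ring

theorem crossRatio_sub_crossRatio {a b c d e : ℂ} (hcd : c ≠ d) (hce : c ≠ e) :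
    crossRatio a b c e - crossRatio a b c d =
      (b - c) * (e - d) * (c - a) / ((a - b) * (c - e) * (c - d)) := by
  have hcd' : c - d ≠ 0 := sub_ne_zero.2 hcd
  have hce' : c - e ≠ 0 := sub_ne_zero.2 hce
  rcases eq_or_ne a b with rfl | hab
  · simp [crossRatio]
  have hab' : a - b ≠ 0 := sub_ne_zero.2 hab
  unfold crossRatio
  field_simp
  ring

theorem crossRatio_recursion_general (wi wj wk wl wm : ℂ)
    (hkl : wk ≠ wl) (hkm : wk ≠ wm)
    (hden : crossRatio wi wj wk wm - crossRatio wi wj wk wl ≠ 0) :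
    crossRatio wj wk wl wm =
      (crossRatio wi wj wk wm - 1) /
        (crossRatio wi wj wk wm - crossRatio wi wj wk wl) := by
  rw [crossRatio_sub_crossRatio hkl hkm] at hden ⊢
  obtain ⟨⟨⟨hjk, hml⟩, hki⟩, ⟨⟨hij, -⟩, -⟩⟩ := by
    simpa only [div_ne_zero_iff, mul_ne_zero_iff] using hden
  have hlm : wl - wm ≠ 0 := by rwa [← neg_sub, neg_ne_zero]
  rw [crossRatio_sub_one (sub_ne_zero.1 hij) hkm, crossRatio]
  field_simp
  ring

/-- The recursion relation among cross-ratios of five pairwise distinct points. -/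
theorem crossRatio_recursion (wi wj wk wl wm : ℂ)
    (hij : wi ≠ wj) (hik : wi ≠ wk) (hil : wi ≠ wl) (him : wi ≠ wm)
    (hjk : wj ≠ wk) (hjl : wj ≠ wl) (hjm : wj ≠ wm)
    (hkl : wk ≠ wl) (hkm : wk ≠ wm) (hlm : wl ≠ wm)
    (hden : crossRatio wi wj wk wm - crossRatio wi wj wk wl ≠ 0) :
    crossRatio wj wk wl wm =
      (crossRatio wi wj wk wm - 1) /
        (crossRatio wi wj wk wm - crossRatio wi wj wk wl) :=
  crossRatio_recursion_general wi wj wk wl wm hkl hkm hden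
end

section
/- Suppose a maximal colored tree T' is obtained from T by a flop at an edge e joining trivalent vertices v_i (below) and v_j (above), where in T the left branch of v_i has a_i leaves, the right branch of v_i has b_i leaves, and the right branch of v_j has b_j leaves (so v_j has a_i + b_i leaves on the left). Then for positive variables x_1, ..., x_{n−1}, y, the ratio of monomials x^{μ_{T'}} / x^{μ_T} equals (x_i/x_j)^{a_i b_j}, a positive power of the simple ratio x_i/x_j. -/
theorem pow_add_mul_pow_div_pow_mul_pow_add {K : Type*} [Field K] {x y : K} (hx : x ≠ 0)
    (hy : y ≠ 0) (m k n : ℕ) :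
    x ^ (m + k) * y ^ n / (x ^ m * y ^ (k + n)) = (x / y) ^ k := by
  rw [pow_add, pow_add, div_pow]
  field_simp

theorem flop_monomial_ratio_general (xi xj : ℝ) (hxi : 0 < xi) (hxj : 0 < xj)
    (ai bi bj : ℕ) (hai : 1 ≤ ai) (hbj : 1 ≤ bj) :
    (xi ^ (ai * (bi + bj)) * xj ^ (bi * bj)) /
        (xi ^ (ai * bi) * xj ^ ((ai + bi) * bj)) =
      (xi / xj) ^ (ai * bj) ∧ 0 < ai * bj := by
  refine ⟨?_, Nat.mul_pos hai hbj⟩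
  rw [Nat.mul_add, Nat.add_mul]
  exact pow_add_mul_pow_div_pow_mul_pow_add hxi.ne' hxj.ne' _ _ _

/-- Effect of a flop on the weight-vector monomials: with
(μ_T)_i = a_i b_i, (μ_T)_j = (a_i + b_i) b_j, (μ_{T'})_i = a_i (b_i + b_j),
(μ_{T'})_j = b_i b_j, the ratio of monomials is the positive power
(x_i/x_j)^{a_i b_j} of the simple ratio x_i/x_j. -/
theorem flop_monomial_ratio (xi xj : ℝ) (hxi : 0 < xi) (hxj : 0 < xj)
    (ai bi bj : ℕ) (hai : 1 ≤ ai) (hbi : 1 ≤ bi) (hbj : 1 ≤ bj) :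
    (xi ^ (ai * (bi + bj)) * xj ^ (bi * bj)) /
        (xi ^ (ai * bi) * xj ^ ((ai + bi) * bj)) =
      (xi / xj) ^ (ai * bj) ∧ 0 < ai * bj :=
  flop_monomial_ratio_general xi xj hxi hxj ai bi bj hai hbj
end
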